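/- The bar map is an involution on partitions in the k×l box: for every partition λ in the k×l box, bar(bar(λ)) = λ. -/

import Mathlib

/-- `lam` (1-indexed; the relevant entries are `lam 1, …, lam l`) is a partition in the
`k × l` box, i.e. `k ≥ λ₁ ≥ λ₂ ≥ … ≥ λ_l ≥ 0`. -/
def IsBoxPartition (k l : ℕ) (lam : ℕ → ℤ) : Prop :=
  lam 1 ≤ (k : ℤ) ∧ (∀ i : ℕ, 1 ≤ i → i < l → lam (i + 1) ≤ lam i) ∧ 0 ≤ lam l

/-- The Durfee number `d_λ`: the largest `i ∈ {1, …, l}` with `λ_i ≥ i`, and `0` if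
no such `i` exists. -/
def durfee (l : ℕ) (lam : ℕ → ℤ) : ℕ :=
  (Finset.Icc 1 l).sup (fun i => if (i : ℤ) ≤ lam i then i else 0)

/-- The bar map `λ ↦ bar(λ)`:
`bar(λ)_i = d_λ + k − λ_{d_λ − i + 1}` for `1 ≤ i ≤ d_λ` and
`bar(λ)_i = d_λ − λ_{l − i + d_λ + 1}` for `d_λ < i ≤ l`. -/
def bar (k l : ℕ) (lam : ℕ → ℤ) : ℕ → ℤ := fun i =>
  if i ≤ durfee l lam then
    (durfee l lam : ℤ) + (k : ℤ) - lam (durfee l lam - i + 1)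
  else
    (durfee l lam : ℤ) - lam (l - i + durfee l lam + 1)

/-- The size `|λ| = λ₁ + ⋯ + λ_l` of a partition in the `k × l` box. -/
def boxSize (l : ℕ) (lam : ℕ → ℤ) : ℤ :=
  ∑ i ∈ Finset.Icc 1 l, lam i

/-- The Poincaré dual `κ̂` of a partition `κ` in the `k × l` box: `κ̂_i = k − κ_{l+1−i}`. -/
def dualP (k l : ℕ) (kap : ℕ → ℤ) : ℕ → ℤ := fun i =>
  (k : ℤ) - kap (l + 1 - i)

/-!
For `λ` in the box, `bar(λ)` keeps the Durfee number `d = d_λ`: the entry `bar(λ)_d = d + k − λ₁`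
is at least `d`, while for `i > d` the entry `bar(λ)_i = d − λ_j` is at most `d < i` since `λ_j ≥ 0`.
With the same `d`, both branches of `bar` are reflections `i ↦ d + 1 − i` of `{1, …, d}` and
`i ↦ l + d + 1 − i` of `{d + 1, …, l}` composed with `x ↦ c − x`, so applying `bar` twice gives back `λ`.
-/

lemma IsBoxPartition.antitoneOn {k l : ℕ} {lam : ℕ → ℤ} (hlam : IsBoxPartition k l lam) :
    AntitoneOn lam (Set.Icc 1 l) := by
  refine antitoneOn_of_succ_le Set.ordConnected_Icc fun a _ ha hsa => ?_
  rw [Order.succ_eq_add_one] at hsa ⊢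
  exact hlam.2.1 a ha.1 (by simp only [Set.mem_Icc] at hsa; omega)

lemma IsBoxPartition.nonneg {k l : ℕ} {lam : ℕ → ℤ} (hlam : IsBoxPartition k l lam) {i : ℕ}
    (hi : 1 ≤ i) (hil : i ≤ l) : 0 ≤ lam i :=
  hlam.2.2.trans <| hlam.antitoneOn ⟨hi, hil⟩ ⟨hi.trans hil, le_rfl⟩ hil

section Durfee

variable {l : ℕ} {lam : ℕ → ℤ}

lemma le_durfee {i : ℕ} (hi : 1 ≤ i) (hil : i ≤ l) (h : (i : ℤ) ≤ lam i) :
    i ≤ durfee l lam :=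
  calc i = if (i : ℤ) ≤ lam i then i else 0 := (if_pos h).symm
    _ ≤ durfee l lam := Finset.le_sup (f := fun j : ℕ => if (j : ℤ) ≤ lam j then j else 0)
      (Finset.mem_Icc.mpr ⟨hi, hil⟩)

lemma durfee_le_of_lt {d : ℕ} (h : ∀ i, d < i → i ≤ l → lam i < i) :
    durfee l lam ≤ d := by
  refine Finset.sup_le fun i hi => ?_
  rw [Finset.mem_Icc] at hi
  split_ifs with hle
  · by_contra! hdi
    exact (h i hdi hi.2).not_ge hle
  · exact Nat.zero_le d

lemma durfee_eq_of {d : ℕ} (hd : d ≤ l) (hdd : 0 < d → (d : ℤ) ≤ lam d)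
    (h : ∀ i, d < i → i ≤ l → lam i < i) : durfee l lam = d := by
  refine le_antisymm (durfee_le_of_lt h) ?_
  rcases Nat.eq_zero_or_pos d with rfl | hpos
  · exact Nat.zero_le _
  · exact le_durfee hpos hd (hdd hpos)

lemma durfee_le_length : durfee l lam ≤ l :=
  Finset.sup_le fun i hi => by
    rw [Finset.mem_Icc] at hi
    split_ifs <;> omega

end Durfee

section Bar

variable {k l : ℕ} {lam : ℕ → ℤ} {i : ℕ}

lemma bar_of_le (h : i ≤ durfee l lam) :
    bar k l lam i = durfee l lam + k - lam (durfee l lam - i + 1) :=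
  if_pos h

lemma bar_of_lt (h : durfee l lam < i) :
    bar k l lam i = durfee l lam - lam (l - i + durfee l lam + 1) :=
  if_neg h.not_ge

lemma durfee_bar (hlam : IsBoxPartition k l lam) : durfee l (bar k l lam) = durfee l lam := by
  refine durfee_eq_of durfee_le_length ?_ fun i hi hil => ?_
  · intro _
    rw [bar_of_le le_rfl, Nat.sub_self, zero_add]
    linarith [hlam.1]
  · rw [bar_of_lt hi]
    have hnonneg := hlam.nonneg (i := l - i + durfee l lam + 1) (by omega) (by omega)
    have hdi : (durfee l lam : ℤ) < i := by exact_mod_cast hi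
    linarith

lemma bar_bar_of_durfee_bar (hd : durfee l (bar k l lam) = durfee l lam) (hi : 1 ≤ i)
    (hil : i ≤ l) :
    bar k l (bar k l lam) i = lam i := by
  rcases le_or_gt i (durfee l lam) with hid | hid
  · rw [bar_of_le (hd ▸ hid), hd, bar_of_le (by omega),
      show durfee l lam - (durfee l lam - i + 1) + 1 = i by omega]
    ring
  · rw [bar_of_lt (hd ▸ hid), hd, bar_of_lt (by omega),
      show l - (l - i + durfee l lam + 1) + durfee l lam + 1 = i by omega]
    ring

end Bar

theorem bar_bar_general (k l : ℕ)
    (lam : ℕ → ℤ) (hlam : IsBoxPartition k l lam) :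
    ∀ i : ℕ, 1 ≤ i → i ≤ l → bar k l (bar k l lam) i = lam i :=
  fun _ hi hil => bar_bar_of_durfee_bar (durfee_bar hlam) hi hil

/-- The bar map is an involution on partitions in the `k × l` box:
`bar(bar(λ))_i = λ_i` for all `1 ≤ i ≤ l`. -/
theorem bar_bar (k l : ℕ) (hk : 1 ≤ k) (hl : 1 ≤ l)
    (lam : ℕ → ℤ) (hlam : IsBoxPartition k l lam) :
    ∀ i : ℕ, 1 ≤ i → i ≤ l → bar k l (bar k l lam) i = lam i :=
  bar_bar_general k l lam hlam
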